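/- arXiv:1706.06958 — 2 statements merged into one kernel-verified Lean document; each statement's English description precedes it below -/
import Mathlib

section
/- Let A be a finite set of integers such that for every prime p, |A_p| ≤ p/2 + ε(p) for some nonnegative function ε on primes. Define the multiplicative function Δ with Δ(p^k) = p^{k-1}·(p/2 + ε(p)). Then for every positive integer v, |A|^2/Δ(v) ≤ Σ_{h mod v} |A(v;h)|^2, where A(v;h) = {a ∈ A : a ≡ h mod v}. -/
/-- A(v;h): the elements of A congruent to h modulo v. -/
def resClass (A : Finset ℤ) (v : ℕ) (h : ℕ) : Finset ℤ :=
  A.filter (fun a => a % (v : ℤ) = (h : ℤ))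

/-- A_v: the set of residue classes covered by A modulo v. -/
def resSet (A : Finset ℤ) (v : ℕ) : Finset ℤ :=
  A.image (fun a => a % (v : ℤ))

/-!
By the Chinese Remainder Theorem, `x ↦ (x mod m, x mod n)` embeds `A_{mn}` into `A_m × A_n` when
`m, n` are coprime, and `x ↦ (x mod m, x div m)` always embeds `A_{mn}` into `A_m × [0, n)`, so
`|A_{p^k}| ≤ p^{k-1} |A_p| ≤ Δ(p^k)`. Hence `|A_v| ≤ Δ(v)`. As `A` is the disjoint union of the
`|A_v|` nonempty classes `A(v;h)`, Cauchy–Schwarz gives `|A|² ≤ |A_v| · Σ_h |A(v;h)|²`.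
-/

open Finset

theorem le_of_le_on_prime_pow_of_coprime_mul_le {f Δ : ℕ → ℝ} (hf : ∀ n, 0 ≤ f n)
    (hf_mul : ∀ m n, m.Coprime n → f (m * n) ≤ f m * f n)
    (hΔ_mul : ∀ m n, m.Coprime n → Δ (m * n) = Δ m * Δ n) (h_one : f 1 ≤ Δ 1)
    (h_pow : ∀ p k, p.Prime → 0 < k → f (p ^ k) ≤ Δ (p ^ k)) :
    ∀ n, 0 < n → f n ≤ Δ n := by
  intro n
  induction n using Nat.recOnPosPrimePosCoprime with
  | prime_pow p k hp hk => exact fun _ ↦ h_pow p k hp hk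
  | zero => exact fun h ↦ absurd h (lt_irrefl 0)
  | one => exact fun _ ↦ h_one
  | coprime a b ha hb hab iha ihb =>
    intro _
    have hfa := iha (by omega)
    calc f (a * b) ≤ f a * f b := hf_mul a b hab
      _ ≤ Δ a * Δ b := mul_le_mul hfa (ihb (by omega)) (hf b) ((hf a).trans hfa)
      _ = Δ (a * b) := (hΔ_mul a b hab).symm

namespace resSet

variable {A : Finset ℤ} {v : ℕ} {x : ℤ}

theorem emod_self (hx : x ∈ resSet A v) : x % v = x := by
  obtain ⟨a, -, rfl⟩ := mem_image.mp hx
  exact Int.emod_emod a v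

theorem emod_mem_of_dvd {m : ℕ} (hm : m ∣ v) (hx : x ∈ resSet A v) :
    x % m ∈ resSet A m := by
  obtain ⟨a, ha, rfl⟩ := mem_image.mp hx
  rw [Int.emod_emod_of_dvd a (Int.natCast_dvd_natCast.mpr hm)]
  exact mem_image_of_mem _ ha

theorem mem_Ico (hv : 0 < v) (hx : x ∈ resSet A v) : x ∈ Ico 0 (v : ℤ) := by
  obtain ⟨a, -, rfl⟩ := mem_image.mp hx
  have hv : (0 : ℤ) < v := by exact_mod_cast hv
  exact mem_Ico.mpr ⟨Int.emod_nonneg a hv.ne', Int.emod_lt_of_pos a hv⟩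

theorem subset_image_range (hv : 0 < v) :
    resSet A v ⊆ (range v).image (Nat.cast : ℕ → ℤ) := by
  intro x hx
  obtain ⟨hx0, hxv⟩ := Finset.mem_Ico.mp (mem_Ico hv hx)
  exact mem_image.mpr ⟨x.toNat, mem_range.mpr (by omega), Int.toNat_of_nonneg hx0⟩

theorem card_mul_le_of_coprime {m n : ℕ} (hmn : m.Coprime n) :
    #(resSet A (m * n)) ≤ #(resSet A m) * #(resSet A n) := by
  rw [← card_product]
  refine card_le_card_of_injOn (fun x ↦ (x % m, x % n)) (fun x hx ↦ ?_)
    (fun x hx y hy hxy ↦ ?_)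
  · exact mem_product.mpr
      ⟨emod_mem_of_dvd (dvd_mul_right m n) hx, emod_mem_of_dvd (dvd_mul_left n m) hx⟩
  · have hxy : x ≡ y [ZMOD m * n] :=
      (Int.modEq_and_modEq_iff_modEq_mul (by simpa using hmn)).mp (Prod.mk.inj hxy)
    rw [← emod_self hx, ← emod_self hy]
    exact_mod_cast hxy

theorem card_mul_le {m n : ℕ} (hm : 0 < m) (hn : 0 < n) :
    #(resSet A (m * n)) ≤ #(resSet A m) * n := by
  have hm' : (0 : ℤ) < m := by exact_mod_cast hm
  calc #(resSet A (m * n)) ≤ #(resSet A m ×ˢ Ico (0 : ℤ) n) := by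
        refine card_le_card_of_injOn (fun x ↦ (x % m, x / m)) (fun x hx ↦ ?_)
          (fun x _ y _ hxy ↦ ?_)
        · obtain ⟨hx0, hxmn⟩ := Finset.mem_Ico.mp (mem_Ico (Nat.mul_pos hm hn) hx)
          refine mem_product.mpr ⟨emod_mem_of_dvd (dvd_mul_right m n) hx, ?_⟩
          refine Finset.mem_Ico.mpr ⟨Int.ediv_nonneg hx0 hm'.le, ?_⟩
          rw [Int.ediv_lt_iff_lt_mul hm']
          push_cast at hxmn
          linarith
        · obtain ⟨hmod, hdiv⟩ := Prod.mk.inj hxy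
          rw [← Int.mul_ediv_add_emod x m, ← Int.mul_ediv_add_emod y m, hmod, hdiv]
    _ = #(resSet A m) * n := by simp

theorem card_pow_le {m k : ℕ} (hm : 0 < m) (hk : 0 < k) :
    #(resSet A (m ^ k)) ≤ #(resSet A m) * m ^ (k - 1) := by
  have := card_mul_le (A := A) hm (pow_pos hm (k - 1))
  rwa [← pow_succ', Nat.sub_add_cancel hk] at this

theorem card_one_le : #(resSet A 1) ≤ 1 :=
  card_le_one.mpr fun x hx y hy ↦ by rw [← emod_self hx, ← emod_self hy]; simp

end resSet

theorem card_sq_le_card_resSet_mul_sum_sq (A : Finset ℤ) {v : ℕ} (hv : 0 < v) :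
    #A ^ 2 ≤ #(resSet A v) * ∑ h ∈ range v, #(resClass A v h) ^ 2 := by
  calc #A ^ 2 = (∑ x ∈ resSet A v, #{a ∈ A | a % v = x}) ^ 2 := by
        rw [resSet, ← card_eq_sum_card_image]
    _ ≤ #(resSet A v) * ∑ x ∈ resSet A v, #{a ∈ A | a % v = x} ^ 2 :=
        sq_sum_le_card_mul_sum_sq
    _ ≤ #(resSet A v) *
          ∑ x ∈ (range v).image ((↑) : ℕ → ℤ), #{a ∈ A | a % v = x} ^ 2 :=
        Nat.mul_le_mul_left _ (sum_le_sum_of_subset (resSet.subset_image_range hv))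
    _ = #(resSet A v) * ∑ h ∈ range v, #(resClass A v h) ^ 2 := by
        rw [sum_image fun _ _ _ _ h ↦ Nat.cast_injective h]
        rfl

theorem larger_sieve_composite_general (A : Finset ℤ) (ε : ℕ → ℝ)
    (hA : ∀ p : ℕ, p.Prime → ((resSet A p).card : ℝ) ≤ (p : ℝ) / 2 + ε p)
    (Δ : ℕ → ℝ)
    (hΔmul : ∀ m n : ℕ, Nat.Coprime m n → Δ (m * n) = Δ m * Δ n)
    (hΔone : Δ 1 = 1)
    (hΔpp : ∀ p k : ℕ, p.Prime → 1 ≤ k →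
      Δ (p ^ k) = (p : ℝ) ^ (k - 1) * ((p : ℝ) / 2 + ε p)) :
    ∀ v : ℕ, 1 ≤ v →
      ((A.card : ℝ) ^ 2) / Δ v ≤
        ∑ h ∈ Finset.range v, ((resClass A v h).card : ℝ) ^ 2 := by
  intro v hv
  have h_pow (p k : ℕ) (hp : p.Prime) (hk : 0 < k) : (#(resSet A (p ^ k)) : ℝ) ≤ Δ (p ^ k) :=
    calc (#(resSet A (p ^ k)) : ℝ) ≤ #(resSet A p) * (p : ℝ) ^ (k - 1) := by
          exact_mod_cast resSet.card_pow_le hp.pos hk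
      _ ≤ ((p : ℝ) / 2 + ε p) * (p : ℝ) ^ (k - 1) := by gcongr; exact hA p hp
      _ = Δ (p ^ k) := by rw [hΔpp p k hp hk, mul_comm]
  have h_one : (#(resSet A 1) : ℝ) ≤ Δ 1 := by
    rw [hΔone]
    exact_mod_cast resSet.card_one_le
  have hΔ : (#(resSet A v) : ℝ) ≤ Δ v :=
    le_of_le_on_prime_pow_of_coprime_mul_le (f := fun n ↦ (#(resSet A n) : ℝ))
      (fun _ ↦ Nat.cast_nonneg _)
      (fun m n hmn ↦ by exact_mod_cast resSet.card_mul_le_of_coprime hmn) hΔmul h_one h_pow v hv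
  refine div_le_of_le_mul₀ ((Nat.cast_nonneg _).trans hΔ) (by positivity) ?_
  rw [mul_comm]
  calc (#A : ℝ) ^ 2 ≤ #(resSet A v) * ∑ h ∈ range v, (#(resClass A v h) : ℝ) ^ 2 := by
        exact_mod_cast card_sq_le_card_resSet_mul_sum_sq A hv
    _ ≤ Δ v * ∑ h ∈ range v, (#(resClass A v h) : ℝ) ^ 2 := by gcongr

theorem larger_sieve_composite (A : Finset ℤ) (ε : ℕ → ℝ)
    (hε : ∀ p : ℕ, p.Prime → 0 ≤ ε p)
    (hA : ∀ p : ℕ, p.Prime → ((resSet A p).card : ℝ) ≤ (p : ℝ) / 2 + ε p)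
    (Δ : ℕ → ℝ)
    (hΔmul : ∀ m n : ℕ, Nat.Coprime m n → Δ (m * n) = Δ m * Δ n)
    (hΔone : Δ 1 = 1)
    (hΔpp : ∀ p k : ℕ, p.Prime → 1 ≤ k →
      Δ (p ^ k) = (p : ℝ) ^ (k - 1) * ((p : ℝ) / 2 + ε p)) :
    ∀ v : ℕ, 1 ≤ v →
      ((A.card : ℝ) ^ 2) / Δ v ≤
        ∑ h ∈ Finset.range v, ((resClass A v h).card : ℝ) ^ 2 :=
  larger_sieve_composite_general A ε hA Δ hΔmul hΔone hΔpp
end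

section
/- Let Δ: ℕ → ℝ be the multiplicative function with Δ(p) = p/2 + ε(p) for primes p (ε(p) ≥ 0 uniformly bounded), restricted to squarefree n. Then M(x) := Σ_{n ≤ x squarefree} 1/Δ(n) = (𝔖/2)(log x)^2 + O(log x), where 𝔖 = Π_p (1-1/p)^2 (1 + 1/Δ(p)) converges. -/
/-!
Let `f(n) = μ(n)² / Δ(n)` and let `ν(n) = μ(n) / n`, the Dirichlet inverse of `n ↦ 1 / n`. Then
`f = h * (1/n) * (1/n)` with `h = f * ν * ν` (`SquarefreeDelta.correction`). The function `h` is
multiplicative, vanishes on `p ^ k` for `k ≥ 4`, and since `Δ(p) = p/2 + O(1)` the leading terms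
cancel: `h(p), h(p²) = O(p⁻²)` and `h(p³) = O(p⁻³)`. So the Euler product of `|h(n)| n^{1/3}` is
bounded, and `Σ |h(n)| (1 + log n)²` converges.

The partial sums of `(1/n) * (1/n)` are `Σ_{d ≤ m} H(m/d) / d` with `H` the harmonic numbers;
the identity `2 Σ_{d ≤ m} H(d) / d = H(m)² + Σ_{d ≤ m} d⁻²` shows they are
`(log m)² / 2 + O(1 + log m)`. Summing this against `h` gives
`M(x) = (Σ h) / 2 · (log x)² + O(log x)`, and `Σ h` is the Euler product of `h`, whose factor at
`p` is `(1 - 1/p)² (1 + 1/Δ(p))`.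
-/

open Finset Real
open scoped ArithmeticFunction.Moebius ArithmeticFunction.zeta
open ArithmeticFunction hiding log

namespace ArithmeticFunction

section CommSemiring

variable {R : Type*} [CommSemiring R]

theorem pmul_mul_pmul_of_map_mul {c : ArithmeticFunction R} (hc : ∀ m n, c (m * n) = c m * c n)
    (f g : ArithmeticFunction R) : c.pmul f * c.pmul g = c.pmul (f * g) := by
  ext n
  simp only [mul_apply, pmul_apply, mul_sum]
  refine sum_congr rfl fun x hx => ?_
  rw [← (Nat.mem_divisorsAntidiagonal.mp hx).1, hc]
  ring

theorem mul_apply_prime_pow (f g : ArithmeticFunction R) {p : ℕ} (hp : p.Prime) (k : ℕ) :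
    (f * g) (p ^ k) = ∑ i ∈ range (k + 1), f (p ^ i) * g (p ^ (k - i)) := by
  rw [mul_apply, Nat.sum_divisorsAntidiagonal (fun d e => f d * g e), Nat.divisors_prime_pow hp,
    sum_map]
  refine sum_congr rfl fun i hi => ?_
  rw [Function.Embedding.coeFn_mk, Nat.pow_div (Nat.lt_succ_iff.mp (mem_range.mp hi)) hp.pos]

theorem mul_apply_prime_pow_succ {f : ArithmeticFunction R} (g : ArithmeticFunction R) {p : ℕ}
    (hp : p.Prime) (hf₁ : f 1 = 1) (hf : ∀ i, f (p ^ (i + 2)) = 0) (k : ℕ) :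
    (f * g) (p ^ (k + 1)) = g (p ^ (k + 1)) + f p * g (p ^ k) := by
  rw [mul_apply_prime_pow f g hp, sum_range_succ', sum_range_succ',
    sum_eq_zero fun i _ => by rw [hf, zero_mul]]
  simp [hf₁, add_comm]

end CommSemiring

noncomputable def recip : ArithmeticFunction ℝ := ⟨fun n => (n : ℝ)⁻¹, by simp⟩

@[simp] theorem recip_apply (n : ℕ) : recip n = (n : ℝ)⁻¹ := rfl

theorem recip_map_mul (m n : ℕ) : recip (m * n) = recip m * recip n := by
  simp [mul_comm]

theorem isMultiplicative_recip : recip.IsMultiplicative :=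
  ⟨by simp, fun {m n} _ => recip_map_mul m n⟩

theorem recip_mul_pmul_moebius : recip * recip.pmul (μ : ArithmeticFunction ℝ) = 1 := by
  nth_rw 1 [← pmul_zeta recip]
  rw [pmul_mul_pmul_of_map_mul recip_map_mul, coe_zeta_mul_coe_moebius]
  ext n
  by_cases hn : n = 1 <;> simp [hn]

noncomputable def absMulRpow (f : ArithmeticFunction ℝ) (s : ℝ) : ArithmeticFunction ℝ :=
  ⟨fun n => |f n| * (n : ℝ) ^ s, by simp⟩

theorem absMulRpow_apply (f : ArithmeticFunction ℝ) (s : ℝ) (n : ℕ) :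
    absMulRpow f s n = |f n| * (n : ℝ) ^ s := rfl

theorem absMulRpow_apply_pow (f : ArithmeticFunction ℝ) (s : ℝ) (p e : ℕ) :
    absMulRpow f s (p ^ e) = |f (p ^ e)| * ((p : ℝ) ^ s) ^ e := by
  rw [absMulRpow_apply, Nat.cast_pow, rpow_pow_comm (Nat.cast_nonneg p)]

theorem IsMultiplicative.absMulRpow {f : ArithmeticFunction ℝ} (hf : f.IsMultiplicative) (s : ℝ) :
    (absMulRpow f s).IsMultiplicative := by
  refine ⟨by simp [absMulRpow_apply, hf.map_one], fun {m n} hmn => ?_⟩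
  simp only [absMulRpow_apply, hf.map_mul_of_coprime hmn, abs_mul, Nat.cast_mul,
    mul_rpow (Nat.cast_nonneg m) (Nat.cast_nonneg n)]
  ring

theorem IsMultiplicative.sum_range_le_prod_primesBelow {f : ArithmeticFunction ℝ}
    (hf : f.IsMultiplicative) (hf₀ : ∀ n, 0 ≤ f n)
    (hsum : ∀ {p : ℕ}, p.Prime → Summable fun e => f (p ^ e)) (N : ℕ) :
    ∑ n ∈ range N, f n ≤ ∏ p ∈ N.primesBelow, ∑' e, f (p ^ e) := by
  obtain ⟨-, hasSum⟩ := EulerProduct.summable_and_hasSum_smoothNumbers_prod_primesBelow_tsum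
    hf.map_one hf.map_mul_of_coprime
    (fun hp => by simpa only [norm_of_nonneg (hf₀ _)] using hsum hp) N
  rw [← hasSum.tsum_eq]
  have hrange : ∀ n ∈ range N, n ≠ 0 → n ∈ N.smoothNumbers := fun n hn hn0 =>
    Nat.mem_smoothNumbers.mpr ⟨hn0, fun p hp =>
      (Nat.le_of_mem_primeFactorsList hp).trans_lt (mem_range.mp hn)⟩
  calc ∑ n ∈ range N, f n = ∑ n ∈ (range N).subtype (· ∈ N.smoothNumbers), f n := by
        rw [sum_subtype_eq_sum_filter]
        refine (sum_filter_of_ne fun n hn h0 => hrange n hn ?_).symm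
        rintro rfl
        simp at h0
    _ ≤ ∑' m : N.smoothNumbers, f m :=
        hasSum.summable.sum_le_tsum _ fun m _ => hf₀ m

theorem IsMultiplicative.summable_of_tsum_prime_pow_le {f : ArithmeticFunction ℝ}
    (hf : f.IsMultiplicative) (hf₀ : ∀ n, 0 ≤ f n)
    (hsum : ∀ {p : ℕ}, p.Prime → Summable fun e => f (p ^ e)) {g : ℕ → ℝ} (hg : Summable g)
    (hg₀ : ∀ n, 0 ≤ g n) (hle : ∀ {p : ℕ}, p.Prime → ∑' e, f (p ^ e) ≤ 1 + g p) :
    Summable f := by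
  refine summable_of_sum_range_le (c := exp (∑' n, g n)) hf₀ fun N =>
    (hf.sum_range_le_prod_primesBelow hf₀ hsum N).trans ?_
  calc ∏ p ∈ N.primesBelow, ∑' e, f (p ^ e) ≤ ∏ p ∈ N.primesBelow, exp (g p) :=
        prod_le_prod (fun p _ => tsum_nonneg fun e => hf₀ _) fun p hp =>
          (hle (Nat.prime_of_mem_primesBelow hp)).trans (by linarith [add_one_le_exp (g p)])
    _ = exp (∑ p ∈ N.primesBelow, g p) := (exp_sum _ _).symm
    _ ≤ exp (∑' n, g n) := exp_le_exp.mpr (hg.sum_le_tsum _ fun n _ => hg₀ n)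

end ArithmeticFunction

theorem harmonic_eq_sum_Ioc (n : ℕ) : (harmonic n : ℝ) = ∑ d ∈ Ioc 0 n, (d : ℝ)⁻¹ := by
  rw [harmonic_eq_sum_Icc]
  push_cast
  rfl

theorem log_le_harmonic (n : ℕ) : log n ≤ harmonic n := by
  rcases n.eq_zero_or_pos with rfl | hn
  · simp
  exact (log_le_log (by positivity) (by simp)).trans (log_add_one_le_harmonic n)

theorem two_mul_sum_harmonic_div (m : ℕ) :
    2 * ∑ d ∈ Ioc 0 m, (harmonic d : ℝ) / d = harmonic m ^ 2 + ∑ d ∈ Ioc 0 m, ((d : ℝ) ^ 2)⁻¹ := by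
  induction m with
  | zero => simp
  | succ m ih =>
    rw [sum_Ioc_succ_top m.zero_le, sum_Ioc_succ_top m.zero_le, mul_add, ih, harmonic_succ]
    push_cast
    field_simp
    ring

theorem log_sub_log_le_log_div_add {d m : ℕ} (hd : 0 < d) (hdm : d ≤ m) :
    log ↑(m / d) ≤ log m - log d ∧ log m - log d ≤ log ↑(m / d) + log 2 := by
  have hq : 0 < m / d := Nat.div_pos hdm hd
  have hd' : (0 : ℝ) < d := by exact_mod_cast hd
  have hq' : (0 : ℝ) < ↑(m / d) := by exact_mod_cast hq
  have hm' : (0 : ℝ) < m := by exact_mod_cast hd.trans_le hdm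
  rw [← log_div hm'.ne' hd'.ne', ← log_mul hq'.ne' two_ne_zero]
  refine ⟨log_le_log hq' Nat.cast_div_le, log_le_log (by positivity) ?_⟩
  rw [div_le_iff₀ hd']
  have : m < d * (m / d + 1) := Nat.lt_mul_div_succ m hd
  have hq1 : (1 : ℝ) ≤ ↑(m / d) := by exact_mod_cast hq
  have : (m : ℝ) < d * (↑(m / d) + 1) := by exact_mod_cast this
  nlinarith

theorem abs_harmonic_div_sub_le {d m : ℕ} (hd : 0 < d) (hdm : d ≤ m) :
    |(harmonic (m / d) : ℝ) - (harmonic m - harmonic d)| ≤ 2 := by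
  obtain ⟨hlo, hhi⟩ := log_sub_log_le_log_div_add hd hdm
  have := log_le_harmonic (m / d); have := harmonic_le_one_add_log (m / d)
  have := log_le_harmonic m; have := harmonic_le_one_add_log m
  have := log_le_harmonic d; have := harmonic_le_one_add_log d
  have : log 2 ≤ 1 := by linarith [log_two_lt_d9]
  rw [abs_le]; constructor <;> linarith

theorem abs_sum_recip_mul_recip_sub_le (m : ℕ) :
    |∑ n ∈ Ioc 0 m, (recip * recip) n - log m ^ 2 / 2| ≤ 3 * (1 + log m) := by
  set H : ℝ := ((harmonic m : ℚ) : ℝ) with hH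
  set H₂ : ℝ := ∑ d ∈ Ioc 0 m, ((d : ℝ) ^ 2)⁻¹
  have hsum : ∑ n ∈ Ioc 0 m, (recip * recip) n = ∑ d ∈ Ioc 0 m, (d : ℝ)⁻¹ * harmonic (m / d) := by
    rw [sum_Ioc_mul_eq_sum_sum]
    simp [harmonic_eq_sum_Ioc]
  have hmain : ∑ d ∈ Ioc 0 m, (d : ℝ)⁻¹ * (H - harmonic d) = H ^ 2 / 2 - H₂ / 2 := by
    have := two_mul_sum_harmonic_div m
    simp only [mul_sub, sum_sub_distrib, ← sum_mul, ← harmonic_eq_sum_Ioc]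
    simp only [div_eq_inv_mul] at this
    linarith
  have herr : |∑ d ∈ Ioc 0 m, (d : ℝ)⁻¹ * harmonic (m / d)
      - ∑ d ∈ Ioc 0 m, (d : ℝ)⁻¹ * (H - harmonic d)| ≤ 2 * H := by
    rw [← sum_sub_distrib]
    calc _ ≤ ∑ d ∈ Ioc 0 m, (d : ℝ)⁻¹ * 2 :=
          (abs_sum_le_sum_abs _ _).trans (sum_le_sum fun d hd => ?_)
      _ = 2 * H := by rw [hH, harmonic_eq_sum_Ioc, mul_sum]; simp only [mul_comm]
    obtain ⟨hd, hdm⟩ := mem_Ioc.mp hd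
    rw [← mul_sub, abs_mul, abs_of_pos (by positivity)]
    exact mul_le_mul_of_nonneg_left (abs_harmonic_div_sub_le hd hdm) (by positivity)
  have hH₂ : 0 ≤ H₂ ∧ H₂ ≤ H := by
    refine ⟨sum_nonneg fun d _ => by positivity, ?_⟩
    rw [hH, harmonic_eq_sum_Ioc m]
    refine sum_le_sum fun d hd => inv_anti₀ (by simpa using (mem_Ioc.mp hd).1) ?_
    have : (1 : ℝ) ≤ d := by exact_mod_cast (mem_Ioc.mp hd).1
    nlinarith
  have := log_le_harmonic m
  have := harmonic_le_one_add_log m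
  have : 0 ≤ log m := log_natCast_nonneg m
  rw [hsum, abs_le]
  rw [hmain, abs_le] at herr
  constructor <;> nlinarith

theorem abs_sum_recip_mul_recip_div_sub_le {d x : ℕ} (hd : 0 < d) (hdx : d ≤ x) :
    |∑ n ∈ Ioc 0 (x / d), (recip * recip) n - (log x - log d) ^ 2 / 2| ≤ 4 * (1 + log x) := by
  obtain ⟨hlo, hhi⟩ := log_sub_log_le_log_div_add hd hdx
  have hq : log ↑(x / d) ≤ log x :=
    log_le_log (by exact_mod_cast Nat.div_pos hdx hd) (by exact_mod_cast Nat.div_le_self x d)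
  have hT := abs_sum_recip_mul_recip_sub_le (x / d)
  have := log_natCast_nonneg (x / d)
  have := log_natCast_nonneg d
  have : log 2 ≤ 1 := by linarith [log_two_lt_d9]
  rw [abs_le] at hT ⊢
  constructor <;> nlinarith

theorem log_natCast_le_log_natCast {m n : ℕ} (hmn : m ≤ n) : log m ≤ log n := by
  rcases m.eq_zero_or_pos with rfl | hm
  · simpa using log_natCast_nonneg n
  exact log_le_log (by exact_mod_cast hm) (by exact_mod_cast hmn)

theorem Summable.abs_of_mul_one_add_log_sq {f : ℕ → ℝ}
    (hW : Summable fun n => |f n| * (1 + log n) ^ 2) : Summable fun n => |f n| :=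
  hW.of_nonneg_of_le (fun _ => abs_nonneg _) fun n =>
    le_mul_of_one_le_right (abs_nonneg _) (by nlinarith [log_natCast_nonneg n])

theorem sq_one_add_log_mul_abs_sum_sub_tsum_le {h : ArithmeticFunction ℝ}
    (hW : Summable fun n => |h n| * (1 + log n) ^ 2) (x : ℕ) :
    (1 + log x) ^ 2 * |∑' n, h n - ∑ n ∈ Ioc 0 x, h n| ≤ ∑' n, |h n| * (1 + log n) ^ 2 := by
  have htail := hW.abs_of_mul_one_add_log_sq.of_abs.sum_add_tsum_nat_add (x + 1)
  rw [range_eq_Ico, sum_eq_sum_Ico_succ_bot x.succ_pos, ArithmeticFunction.map_zero,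
    zero_add] at htail
  rw [← htail, show Ico (0 + 1) x.succ = Ioc 0 x from rfl, add_sub_cancel_left,
    ← abs_of_nonneg (sq_nonneg (1 + log x)), ← abs_mul, ← tsum_mul_left]
  have hW' := (summable_nat_add_iff (x + 1)).mpr hW
  have hle' : ∀ i, |(1 + log x) ^ 2 * h (i + (x + 1))| ≤
      |h (i + (x + 1))| * (1 + log ↑(i + (x + 1))) ^ 2 := fun i => by
    rw [abs_mul, abs_of_nonneg (sq_nonneg _), mul_comm]
    have := log_natCast_le_log_natCast (by omega : x ≤ i + (x + 1))
    gcongr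
  have habs' : Summable fun i => ‖(1 + log x) ^ 2 * h (i + (x + 1))‖ :=
    hW'.of_nonneg_of_le (fun _ => norm_nonneg _) fun i => (Real.norm_eq_abs _).trans_le (hle' i)
  rw [← Real.norm_eq_abs]
  calc _ ≤ ∑' i, ‖(1 + log x) ^ 2 * h (i + (x + 1))‖ := norm_tsum_le_tsum_norm habs'
    _ ≤ ∑' i, |h (i + (x + 1))| * (1 + log ↑(i + (x + 1))) ^ 2 :=
        habs'.tsum_le_tsum (fun i => (Real.norm_eq_abs _).trans_le (hle' i)) hW'
    _ ≤ _ := by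
        rw [← hW.sum_add_tsum_nat_add (x + 1)]
        exact le_add_of_nonneg_left (sum_nonneg fun n _ => by positivity)

theorem sum_abs_mul_log_pow_le {h : ℕ → ℝ} (hW : Summable fun n => |h n| * (1 + log n) ^ 2)
    (x : ℕ) {k : ℕ} (hk : k ≤ 2) :
    ∑ d ∈ Ioc 0 x, |h d| * log d ^ k ≤ ∑' n, |h n| * (1 + log n) ^ 2 := by
  refine (sum_le_sum fun d _ => mul_le_mul_of_nonneg_left ?_ (abs_nonneg (h d))).trans
    (hW.sum_le_tsum _ fun n _ => by positivity)
  have := log_natCast_nonneg d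
  interval_cases k <;> nlinarith

theorem abs_sum_mul_log_pow_le {h : ℕ → ℝ} (hW : Summable fun n => |h n| * (1 + log n) ^ 2)
    (x : ℕ) {k : ℕ} (hk : k ≤ 2) :
    |∑ d ∈ Ioc 0 x, h d * log d ^ k| ≤ ∑' n, |h n| * (1 + log n) ^ 2 :=
  (abs_sum_le_sum_abs _ _).trans <| (sum_le_sum fun d _ => by
    rw [abs_mul, abs_of_nonneg (pow_nonneg (log_natCast_nonneg d) k)]).trans
      (sum_abs_mul_log_pow_le hW x hk)

theorem abs_sum_mul_recip_mul_recip_sub_le {h : ArithmeticFunction ℝ}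
    (hW : Summable fun n => |h n| * (1 + log n) ^ 2) (x : ℕ) :
    |∑ n ∈ Ioc 0 x, (h * (recip * recip)) n - (∑' n, h n) / 2 * log x ^ 2| ≤
      5 * (∑' n, |h n| * (1 + log n) ^ 2) * (1 + log x) := by
  set S := ∑' n, |h n| * (1 + log n) ^ 2
  set ℓ := log x
  have hℓ : 0 ≤ ℓ := log_natCast_nonneg x
  have hmain : |∑ d ∈ Ioc 0 x, h d * ∑ n ∈ Ioc 0 (x / d), (recip * recip) n
      - ∑ d ∈ Ioc 0 x, h d * ((ℓ - log d) ^ 2 / 2)| ≤ S * (4 * (1 + ℓ)) := by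
    rw [← sum_sub_distrib]
    refine (abs_sum_le_sum_abs _ _).trans <| (sum_le_sum fun d hd => ?_).trans <|
      (sum_mul _ _ _).symm.trans_le <| mul_le_mul_of_nonneg_right
        (by simpa using sum_abs_mul_log_pow_le hW x (Nat.zero_le 2)) (by positivity)
    rw [← mul_sub, abs_mul]
    exact mul_le_mul_of_nonneg_left
      (abs_sum_recip_mul_recip_div_sub_le (mem_Ioc.mp hd).1 (mem_Ioc.mp hd).2) (abs_nonneg _)
  have hexpand : ∑ d ∈ Ioc 0 x, h d * ((ℓ - log d) ^ 2 / 2) = ℓ ^ 2 / 2 * ∑ d ∈ Ioc 0 x, h d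
      - ℓ * ∑ d ∈ Ioc 0 x, h d * log d + (∑ d ∈ Ioc 0 x, h d * log d ^ 2) / 2 := by
    simp only [mul_sum, sum_div, ← sum_sub_distrib, ← sum_add_distrib]
    exact sum_congr rfl fun d _ => by ring
  have htail : |ℓ ^ 2 / 2 * (∑' n, h n - ∑ d ∈ Ioc 0 x, h d)| ≤ S / 2 := by
    have := sq_one_add_log_mul_abs_sum_sub_tsum_le hW x
    rw [abs_mul, abs_of_nonneg (by positivity)]
    nlinarith [abs_nonneg (∑' n, h n - ∑ d ∈ Ioc 0 x, h d)]
  have h1 : |ℓ * ∑ d ∈ Ioc 0 x, h d * log d| ≤ ℓ * S := by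
    rw [abs_mul, abs_of_nonneg hℓ]
    exact mul_le_mul_of_nonneg_left (by simpa using abs_sum_mul_log_pow_le hW x one_le_two) hℓ
  have h2 := abs_sum_mul_log_pow_le hW x le_rfl
  rw [sum_Ioc_mul_eq_sum_sum]
  rw [hexpand] at hmain
  rw [abs_le] at hmain htail h1 h2 ⊢
  constructor <;> nlinarith

theorem one_add_log_sq_le_rpow {x : ℝ} (hx : 1 ≤ x) : (1 + log x) ^ 2 ≤ 49 * x ^ (3⁻¹ : ℝ) := by
  have hlog := log_le_rpow_div (zero_le_one.trans hx) (by norm_num : (0 : ℝ) < 6⁻¹)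
  have h1 : 1 ≤ x ^ (6⁻¹ : ℝ) := one_le_rpow hx (by norm_num)
  have h2 : x ^ (3⁻¹ : ℝ) = (x ^ (6⁻¹ : ℝ)) ^ 2 := by
    rw [← rpow_natCast, ← rpow_mul (zero_le_one.trans hx)]; norm_num
  have hlog' : log x ≤ 6 * x ^ (6⁻¹ : ℝ) := by simpa [div_inv_eq_mul, mul_comm] using hlog
  have := log_nonneg hx
  rw [h2]
  nlinarith

theorem inv_half_add_bounds {x e C : ℝ} (hx : 0 < x) (he : 0 ≤ e) (heC : e ≤ C) :
    0 < (x / 2 + e)⁻¹ ∧ (x / 2 + e)⁻¹ ≤ 2 * x⁻¹ ∧ 2 * x⁻¹ - (x / 2 + e)⁻¹ ≤ 4 * C * x⁻¹ ^ 2 := by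
  have hD : 0 < x / 2 + e := by positivity
  have hC : 0 ≤ C := he.trans heC
  have hinv : (x / 2 + e)⁻¹ ≤ 2 * x⁻¹ := by
    rw [inv_le_comm₀ hD (by positivity)]
    field_simp
    linarith
  refine ⟨inv_pos.mpr hD, hinv, ?_⟩
  calc 2 * x⁻¹ - (x / 2 + e)⁻¹ = 2 * e * x⁻¹ * (x / 2 + e)⁻¹ := by field_simp; ring
    _ ≤ 2 * C * x⁻¹ * (2 * x⁻¹) := by gcongr
    _ = 4 * C * x⁻¹ ^ 2 := by ring

-- The Euler factor of `n ↦ |h n| * n ^ (1/3)` at `p = t ^ 3`.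
theorem euler_factor_cbrt_weight_le {t C b₁ b₂ b₃ : ℝ} (ht : 1 ≤ t) (hC : 0 ≤ C)
    (h₁ : b₁ ≤ 4 * C * ((t ^ 3)⁻¹) ^ 2) (h₂ : b₂ ≤ 5 * ((t ^ 3)⁻¹) ^ 2)
    (h₃ : b₃ ≤ 2 * ((t ^ 3)⁻¹) ^ 3) :
    1 + b₁ * t + b₂ * t ^ 2 + b₃ * t ^ 3 ≤ 1 + (4 * C + 7) * (t ^ 4)⁻¹ := by
  have ht0 : 0 < t := zero_lt_one.trans_le ht
  set u := t⁻¹ with hu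
  have hu0 : 0 < u := inv_pos.mpr ht0
  have hu1 : u ≤ 1 := inv_le_one_of_one_le₀ ht
  have htu : t * u = 1 := mul_inv_cancel₀ ht0.ne'
  rw [← inv_pow] at h₁ h₂ h₃ ⊢
  rw [← hu] at h₁ h₂ h₃ ⊢
  have e1 : b₁ * t ≤ 4 * C * u ^ 4 := by
    calc b₁ * t ≤ 4 * C * (u ^ 3) ^ 2 * t := by gcongr
      _ = 4 * C * u ^ 5 * (t * u) := by ring
      _ ≤ 4 * C * u ^ 4 := by
        rw [htu, mul_one]
        exact mul_le_mul_of_nonneg_left (pow_le_pow_of_le_one hu0.le hu1 (by norm_num))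
          (by positivity)
  have e2 : b₂ * t ^ 2 ≤ 5 * u ^ 4 := by
    calc b₂ * t ^ 2 ≤ 5 * (u ^ 3) ^ 2 * t ^ 2 := by gcongr
      _ = 5 * u ^ 4 * (t * u) ^ 2 := by ring
      _ = 5 * u ^ 4 := by rw [htu]; ring
  have e3 : b₃ * t ^ 3 ≤ 2 * u ^ 4 := by
    calc b₃ * t ^ 3 ≤ 2 * (u ^ 3) ^ 3 * t ^ 3 := by gcongr
      _ = 2 * u ^ 6 * (t * u) ^ 3 := by ring
      _ ≤ 2 * u ^ 4 := by
        rw [htu, one_pow, mul_one]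
        exact mul_le_mul_of_nonneg_left (pow_le_pow_of_le_one hu0.le hu1 (by norm_num))
          (by positivity)
  linarith

theorem hasSum_sum_range_of_add_eq_zero {M : Type*} [AddCommMonoid M] [TopologicalSpace M]
    {f : ℕ → M} {n : ℕ} (hf : ∀ k, f (k + n) = 0) : HasSum f (∑ k ∈ range n, f k) :=
  hasSum_sum_of_ne_finset_zero fun k hk => by
    obtain ⟨j, rfl⟩ := Nat.exists_eq_add_of_le (not_lt.mp (mt mem_range.mpr hk))
    rw [add_comm]
    exact hf j

namespace SquarefreeDelta

local notation "ν" => recip.pmul (μ : ArithmeticFunction ℝ)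

noncomputable def sqfreeRecip (Δ : ℕ → ℝ) : ArithmeticFunction ℝ :=
  ⟨fun n => if Squarefree n then (Δ n)⁻¹ else 0, by simp⟩

noncomputable def correction (Δ : ℕ → ℝ) : ArithmeticFunction ℝ :=
  sqfreeRecip Δ * (ν * ν)

variable {Δ : ℕ → ℝ}

theorem sqfreeRecip_apply (n : ℕ) : sqfreeRecip Δ n = if Squarefree n then (Δ n)⁻¹ else 0 := rfl

theorem sqfreeRecip_eq_correction_mul : sqfreeRecip Δ = correction Δ * (recip * recip) :=
  calc sqfreeRecip Δ = sqfreeRecip Δ * ((recip * ν) * (recip * ν)) := by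
        rw [recip_mul_pmul_moebius, mul_one, mul_one]
    _ = correction Δ * (recip * recip) := by rw [correction]; ring

theorem isMultiplicative_sqfreeRecip (hone : Δ 1 = 1)
    (hmul : ∀ m n : ℕ, m.Coprime n → Δ (m * n) = Δ m * Δ n) : (sqfreeRecip Δ).IsMultiplicative := by
  refine ⟨by simp [sqfreeRecip_apply, hone], fun {m n} hmn => ?_⟩
  simp only [sqfreeRecip_apply, Nat.squarefree_mul_iff, and_iff_right hmn, hmul m n hmn, mul_inv]
  by_cases hm : Squarefree m <;> by_cases hn : Squarefree n <;> simp [hm, hn]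

theorem isMultiplicative_recip_pmul_moebius : (ν).IsMultiplicative :=
  isMultiplicative_recip.pmul isMultiplicative_moebius.intCast

theorem isMultiplicative_correction (hone : Δ 1 = 1)
    (hmul : ∀ m n : ℕ, m.Coprime n → Δ (m * n) = Δ m * Δ n) : (correction Δ).IsMultiplicative :=
  (isMultiplicative_sqfreeRecip hone hmul).mul
    (isMultiplicative_recip_pmul_moebius.mul isMultiplicative_recip_pmul_moebius)

theorem correction_apply_one (hone : Δ 1 = 1) : correction Δ 1 = 1 := by
  simp [correction, sqfreeRecip_apply, hone]

section PrimePow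

variable {p : ℕ}

theorem recip_pmul_moebius_apply_prime (hp : p.Prime) : ν p = -(p : ℝ)⁻¹ := by
  simp [pmul_apply, moebius_apply_prime hp]

theorem recip_pmul_moebius_apply_prime_pow_add_two (hp : p.Prime) (i : ℕ) :
    ν (p ^ (i + 2)) = 0 := by
  simp [pmul_apply, moebius_apply_prime_pow hp]

theorem sqfreeRecip_apply_prime_pow_add_two (hp : p.Prime) (i : ℕ) :
    sqfreeRecip Δ (p ^ (i + 2)) = 0 := by
  rw [sqfreeRecip_apply, if_neg]
  exact fun hsq => hp.prime.not_isUnit (hsq p (by rw [← sq]; exact pow_dvd_pow p (by omega)))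

theorem recip_pmul_moebius_sq_apply_prime_pow_succ (hp : p.Prime) (k : ℕ) :
    (ν * ν) (p ^ (k + 1)) = ν (p ^ (k + 1)) - (p : ℝ)⁻¹ * ν (p ^ k) := by
  rw [mul_apply_prime_pow_succ _ hp isMultiplicative_recip_pmul_moebius.map_one
    (recip_pmul_moebius_apply_prime_pow_add_two hp), recip_pmul_moebius_apply_prime hp, neg_mul,
    sub_eq_add_neg]

theorem correction_apply_prime_pow_succ (hp : p.Prime) (hone : Δ 1 = 1) (k : ℕ) :
    correction Δ (p ^ (k + 1)) = (ν * ν) (p ^ (k + 1)) + (Δ p)⁻¹ * (ν * ν) (p ^ k) := by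
  rw [correction, mul_apply_prime_pow_succ _ hp (by simp [sqfreeRecip_apply, hone])
    (sqfreeRecip_apply_prime_pow_add_two hp), sqfreeRecip_apply, if_pos hp.squarefree]

theorem recip_pmul_moebius_sq_apply_prime (hp : p.Prime) : (ν * ν) p = -2 * (p : ℝ)⁻¹ := by
  have h := recip_pmul_moebius_sq_apply_prime_pow_succ hp 0
  rw [zero_add, pow_one, pow_zero, recip_pmul_moebius_apply_prime hp,
    isMultiplicative_recip_pmul_moebius.map_one] at h
  linear_combination h

theorem recip_pmul_moebius_sq_apply_prime_sq (hp : p.Prime) :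
    (ν * ν) (p ^ 2) = (p : ℝ)⁻¹ ^ 2 := by
  have h := recip_pmul_moebius_sq_apply_prime_pow_succ hp 1
  rw [pow_one, recip_pmul_moebius_apply_prime hp,
    recip_pmul_moebius_apply_prime_pow_add_two hp 0] at h
  linear_combination h

theorem recip_pmul_moebius_sq_apply_prime_pow_add_three (hp : p.Prime) (k : ℕ) :
    (ν * ν) (p ^ (k + 3)) = 0 := by
  rw [recip_pmul_moebius_sq_apply_prime_pow_succ hp (k + 2),
    recip_pmul_moebius_apply_prime_pow_add_two hp, recip_pmul_moebius_apply_prime_pow_add_two hp]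
  ring

theorem correction_apply_prime (hp : p.Prime) (hone : Δ 1 = 1) :
    correction Δ p = (Δ p)⁻¹ - 2 * (p : ℝ)⁻¹ := by
  have h := correction_apply_prime_pow_succ (Δ := Δ) hp hone 0
  rw [zero_add, pow_one, pow_zero, recip_pmul_moebius_sq_apply_prime hp,
    (isMultiplicative_recip_pmul_moebius.mul isMultiplicative_recip_pmul_moebius).map_one] at h
  linear_combination h

theorem correction_apply_prime_sq (hp : p.Prime) (hone : Δ 1 = 1) :
    correction Δ (p ^ 2) = (p : ℝ)⁻¹ ^ 2 - 2 * (p : ℝ)⁻¹ * (Δ p)⁻¹ := by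
  have h := correction_apply_prime_pow_succ (Δ := Δ) hp hone 1
  rw [pow_one, recip_pmul_moebius_sq_apply_prime hp, recip_pmul_moebius_sq_apply_prime_sq hp] at h
  linear_combination h

theorem correction_apply_prime_pow_three (hp : p.Prime) (hone : Δ 1 = 1) :
    correction Δ (p ^ 3) = (Δ p)⁻¹ * (p : ℝ)⁻¹ ^ 2 := by
  have h := correction_apply_prime_pow_succ (Δ := Δ) hp hone 2
  rw [recip_pmul_moebius_sq_apply_prime_sq hp,
    recip_pmul_moebius_sq_apply_prime_pow_add_three hp 0] at h
  linear_combination h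

theorem correction_apply_prime_pow_add_four (hp : p.Prime) (hone : Δ 1 = 1) (k : ℕ) :
    correction Δ (p ^ (k + 4)) = 0 := by
  rw [correction_apply_prime_pow_succ hp hone (k + 3),
    recip_pmul_moebius_sq_apply_prime_pow_add_three hp,
    recip_pmul_moebius_sq_apply_prime_pow_add_three hp]
  ring

theorem hasSum_correction_prime_pow (hp : p.Prime) (hone : Δ 1 = 1) :
    HasSum (fun e => correction Δ (p ^ e)) ((1 - (p : ℝ)⁻¹) ^ 2 * (1 + (Δ p)⁻¹)) := by
  convert hasSum_sum_range_of_add_eq_zero (f := fun e => correction Δ (p ^ e))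
    (correction_apply_prime_pow_add_four hp hone) using 1
  rw [sum_range_succ, sum_range_succ, sum_range_succ, sum_range_one, pow_zero, pow_one,
    correction_apply_one hone, correction_apply_prime hp hone,
    correction_apply_prime_sq hp hone, correction_apply_prime_pow_three hp hone]
  ring

theorem abs_correction_apply_prime_pow_le (hp : p.Prime) (hone : Δ 1 = 1) {e C : ℝ}
    (he : 0 ≤ e) (heC : e ≤ C) (hΔp : Δ p = p / 2 + e) :
    |correction Δ p| ≤ 4 * C * (p : ℝ)⁻¹ ^ 2 ∧ |correction Δ (p ^ 2)| ≤ 5 * (p : ℝ)⁻¹ ^ 2 ∧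
      |correction Δ (p ^ 3)| ≤ 2 * (p : ℝ)⁻¹ ^ 3 := by
  obtain ⟨ha₀, ha, haC⟩ := inv_half_add_bounds (x := p) (by exact_mod_cast hp.pos) he heC
  rw [← hΔp] at ha₀ ha haC
  have hq : 0 ≤ (p : ℝ)⁻¹ := by positivity
  rw [correction_apply_prime hp hone, correction_apply_prime_sq hp hone,
    correction_apply_prime_pow_three hp hone, abs_of_nonpos (by linarith),
    abs_of_nonneg (mul_nonneg ha₀.le (sq_nonneg _))]
  refine ⟨by linarith, abs_le.mpr ⟨?_, ?_⟩, ?_⟩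
  · nlinarith [mul_le_mul_of_nonneg_left ha hq]
  · nlinarith [mul_nonneg hq ha₀.le]
  · nlinarith [mul_le_mul_of_nonneg_right ha (sq_nonneg (p : ℝ)⁻¹)]

end PrimePow

theorem summable_absMulRpow_correction {ε : ℕ → ℝ} {C : ℝ} (hC : 0 ≤ C) (hone : Δ 1 = 1)
    (hmul : ∀ m n : ℕ, m.Coprime n → Δ (m * n) = Δ m * Δ n)
    (hε : ∀ p : ℕ, p.Prime → 0 ≤ ε p ∧ ε p ≤ C) (hΔp : ∀ p : ℕ, p.Prime → Δ p = p / 2 + ε p) :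
    Summable (absMulRpow (correction Δ) 3⁻¹) := by
  have hlocal : ∀ {p : ℕ}, p.Prime → HasSum (fun e => absMulRpow (correction Δ) 3⁻¹ (p ^ e))
      (∑ e ∈ range 4, absMulRpow (correction Δ) 3⁻¹ (p ^ e)) := fun hp =>
    hasSum_sum_range_of_add_eq_zero fun k => by
      rw [absMulRpow_apply, correction_apply_prime_pow_add_four hp hone, abs_zero, zero_mul]
  have hg : Summable fun n : ℕ => (4 * C + 7) * (((n : ℝ) ^ (3⁻¹ : ℝ)) ^ 4)⁻¹ := by
    refine ((summable_nat_rpow_inv (p := 4 / 3)).mpr (by norm_num)).mul_left (4 * C + 7)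
      |>.congr fun n => ?_
    rw [← rpow_natCast, ← rpow_mul (Nat.cast_nonneg n)]
    norm_num
  refine ((isMultiplicative_correction hone hmul).absMulRpow 3⁻¹).summable_of_tsum_prime_pow_le
    (fun n => by rw [absMulRpow_apply]; positivity) (fun hp => (hlocal hp).summable) hg
    (fun n => by positivity) fun {p} hp => ?_
  obtain ⟨h₁, h₂, h₃⟩ :=
    abs_correction_apply_prime_pow_le hp hone (hε p hp).1 (hε p hp).2 (hΔp p hp)
  have ht : (p : ℝ) = ((p : ℝ) ^ (3⁻¹ : ℝ)) ^ 3 := by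
    rw [← Nat.cast_ofNat, rpow_inv_natCast_pow (Nat.cast_nonneg p) (by norm_num)]
  rw [ht] at h₁ h₂ h₃
  rw [(hlocal hp).tsum_eq]
  simp only [sum_range_succ, sum_range_zero, absMulRpow_apply_pow, pow_zero, pow_one,
    correction_apply_one hone, abs_one, zero_add, one_mul]
  exact euler_factor_cbrt_weight_le (one_le_rpow (by exact_mod_cast hp.one_lt.le) (by norm_num))
    hC h₁ h₂ h₃

theorem summable_abs_correction_mul_one_add_log_sq {ε : ℕ → ℝ} {C : ℝ} (hC : 0 ≤ C)
    (hone : Δ 1 = 1) (hmul : ∀ m n : ℕ, m.Coprime n → Δ (m * n) = Δ m * Δ n)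
    (hε : ∀ p : ℕ, p.Prime → 0 ≤ ε p ∧ ε p ≤ C) (hΔp : ∀ p : ℕ, p.Prime → Δ p = p / 2 + ε p) :
    Summable fun n => |correction Δ n| * (1 + log n) ^ 2 := by
  refine ((summable_absMulRpow_correction hC hone hmul hε hΔp).mul_left 49).of_nonneg_of_le
    (fun n => by positivity) fun n => ?_
  rcases n.eq_zero_or_pos with rfl | hn
  · simp
  rw [absMulRpow_apply, mul_left_comm]
  exact mul_le_mul_of_nonneg_left (one_add_log_sq_le_rpow (by exact_mod_cast hn)) (abs_nonneg _)

end SquarefreeDelta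

open SquarefreeDelta in
theorem squarefree_sum_reciprocal_delta_general (C : ℝ) (hC : 0 ≤ C)
    (Δ : ℕ → ℝ) (ε : ℕ → ℝ)
    (hone : Δ 1 = 1)
    (hmul : ∀ m n : ℕ, Nat.Coprime m n → Δ (m * n) = Δ m * Δ n)
    (hε : ∀ p : ℕ, p.Prime → 0 ≤ ε p ∧ ε p ≤ C)
    (hΔp : ∀ p : ℕ, p.Prime → Δ p = (p : ℝ) / 2 + ε p) :
    ∃ 𝔖 : ℝ,
      Filter.Tendsto
        (fun y : ℕ => ∏ p ∈ (Finset.range y).filter Nat.Prime,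
          (1 - 1 / (p : ℝ)) ^ 2 * (1 + 1 / Δ p))
        Filter.atTop (nhds 𝔖) ∧
      ∃ K : ℝ, ∃ x₀ : ℕ, ∀ x : ℕ, x₀ ≤ x →
        |(∑ n ∈ (Finset.Icc 1 x).filter Squarefree, 1 / Δ n) -
            𝔖 / 2 * (Real.log x) ^ 2| ≤ K * Real.log x := by
  have hW := summable_abs_correction_mul_one_add_log_sq hC hone hmul hε hΔp
  set S := ∑' n, |correction Δ n| * (1 + log n) ^ 2
  refine ⟨∑' n, correction Δ n, ?_, 10 * S, 3, fun x hx => ?_⟩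
  · refine ((isMultiplicative_correction hone hmul).eulerProduct
      hW.abs_of_mul_one_add_log_sq).congr fun y => prod_congr rfl fun p hp => ?_
    rw [(hasSum_correction_prime_pow (mem_filter.mp hp).2 hone).tsum_eq, one_div, one_div]
  have hℓ : 1 ≤ log x := by
    rw [le_log_iff_exp_le (by positivity)]
    have : (3 : ℝ) ≤ x := by exact_mod_cast hx
    linarith [exp_one_lt_d9]
  have hS : 0 ≤ S := tsum_nonneg fun n => by positivity
  have hsum : ∑ n ∈ (Icc 1 x).filter Squarefree, 1 / Δ n =
      ∑ n ∈ Ioc 0 x, (correction Δ * (recip * recip)) n := by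
    rw [← sqfreeRecip_eq_correction_mul, sum_filter]
    exact sum_congr rfl fun n _ => by rw [sqfreeRecip_apply, one_div]
  rw [hsum]
  refine (abs_sum_mul_recip_mul_recip_sub_le hW x).trans ?_
  nlinarith

theorem squarefree_sum_reciprocal_delta (C : ℝ) (hC : 0 ≤ C)
    (Δ : ℕ → ℝ) (ε : ℕ → ℝ)
    (hpos : ∀ n : ℕ, 1 ≤ n → 0 < Δ n)
    (hone : Δ 1 = 1)
    (hmul : ∀ m n : ℕ, Nat.Coprime m n → Δ (m * n) = Δ m * Δ n)
    (hε : ∀ p : ℕ, p.Prime → 0 ≤ ε p ∧ ε p ≤ C)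
    (hΔp : ∀ p : ℕ, p.Prime → Δ p = (p : ℝ) / 2 + ε p) :
    ∃ 𝔖 : ℝ,
      Filter.Tendsto
        (fun y : ℕ => ∏ p ∈ (Finset.range y).filter Nat.Prime,
          (1 - 1 / (p : ℝ)) ^ 2 * (1 + 1 / Δ p))
        Filter.atTop (nhds 𝔖) ∧
      ∃ K : ℝ, ∃ x₀ : ℕ, ∀ x : ℕ, x₀ ≤ x →
        |(∑ n ∈ (Finset.Icc 1 x).filter Squarefree, 1 / Δ n) -
            𝔖 / 2 * (Real.log x) ^ 2| ≤ K * Real.log x :=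
  squarefree_sum_reciprocal_delta_general C hC Δ ε hone hmul hε hΔp
end
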